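/- arXiv:2302.14646 — 8 statements merged into one kernel-verified Lean document; each statement's English description precedes it below -/
import Mathlib

section
/- Let R be a commutative ring, m ≥ 1, and a₁,…,a_m ∈ R. Let f = 1 + ∑_{j=1}^m a_j X^j ∈ R⟦X⟧ and let Y_N denote the coefficient of X^N in f⁻¹. Then for every N ∈ ℕ, Y_N = ∑ (−1)^{n₁+n₂+⋯+n_m} · ∏_{d=2}^{m} C(n₁+n₂+⋯+n_d, n_d) · ∏_{v=1}^{m} a_v^{n_v}, where the sum ranges over all m-tuples (n₁,…,n_m) of nonnegative integers satisfying n₁ + 2n₂ + 3n₃ + ⋯ + m·n_m = N. -/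
open PowerSeries Finset

/-!
Since `g = ∑ aⱼ Xʲ` has no constant term, `(1 + g)⁻¹ = ∑ₖ (-g)ᵏ` and only `k ≤ N` contributes to
the coefficient of `X^N`. The multinomial theorem expands `gᵏ` over the tuples `n` with
`∑ nᵥ = k`, the tuple contributing to `X^N` exactly when `∑ v nᵥ = N`; grouping the tuples of
weight `N` by `∑ nᵥ` gives the formula, once the multinomial coefficient of a tuple indexed by
`Fin m` is written as the product of the binomials `C(n₁ + ⋯ + n_d, n_d)`.
-/

theorem Nat.multinomial_map {α β : Type*} (s : Finset α) (e : α ↪ β) (f : β → ℕ) :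
    Nat.multinomial (s.map e) f = Nat.multinomial s (f ∘ e) := by
  simp [Nat.multinomial, sum_map, prod_map]

theorem Nat.multinomial_univ_fin (m : ℕ) (n : Fin m → ℕ) :
    Nat.multinomial univ n = ∏ i, (∑ k ∈ Iic i, n k).choose (n i) := by
  induction m with
  | zero => simp
  | succ m ih =>
    rw [Fin.univ_castSuccEmb, Nat.multinomial_cons, Nat.multinomial_map, ← Fin.univ_castSuccEmb,
      Fin.prod_univ_castSucc, ih, mul_comm]
    simp only [Fin.sum_Iic_castSucc, Function.comp_apply, Fin.coe_castSuccEmb, sum_map]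
    congr 2
    rw [← Fin.top_eq_last, Iic_top, Fin.sum_univ_castSucc, add_comm]
    rfl

theorem Fin.sum_Iic_of_val_eq_zero {M : Type*} [AddCommMonoid M] {m : ℕ} (f : Fin m → M)
    {i : Fin m} (hi : i.1 = 0) : ∑ k ∈ Iic i, f k = f i := by
  have : Iic i = {i} := Finset.ext fun k => by
    simp only [mem_Iic, mem_singleton, Fin.le_def, Fin.ext_iff]; omega
  rw [this, sum_singleton]

theorem Finset.sum_Icc_one_eq_sum_fin {M : Type*} [AddCommMonoid M] (m : ℕ) (f : ℕ → M) :
    ∑ j ∈ Icc 1 m, f j = ∑ i : Fin m, f (i + 1) := by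
  rw [Fin.sum_univ_eq_sum_range (fun i => f (i + 1)), ← Ico_add_one_right_eq_Icc,
    sum_Ico_eq_sum_range]
  simp [add_comm]

theorem Finset.sum_le_sum_mul_of_one_le {ι : Type*} (s : Finset ι) {w : ι → ℕ}
    (hw : ∀ i ∈ s, 1 ≤ w i) (n : ι → ℕ) : ∑ i ∈ s, n i ≤ ∑ i ∈ s, w i * n i :=
  sum_le_sum fun i hi => Nat.le_mul_of_pos_left _ (hw i hi)

theorem Fintype.filter_piFinset_range_filter_sum_eq {ι : Type*} [Fintype ι] [DecidableEq ι]
    {w : ι → ℕ} (hw : ∀ i, 1 ≤ w i) (N k : ℕ) :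
    {n ∈ {n ∈ piFinset (fun _ : ι => range (N + 1)) | ∑ i, w i * n i = N} | ∑ i, n i = k} =
      {n ∈ piAntidiag (univ : Finset ι) k | ∑ i, w i * n i = N} := by
  ext n
  simp only [mem_filter, mem_piFinset, mem_range, mem_piAntidiag]
  refine ⟨fun ⟨⟨_, hN⟩, hk⟩ => ⟨⟨hk, by simp⟩, hN⟩,
    fun ⟨⟨hk, _⟩, hN⟩ => ⟨⟨fun i => ?_, hN⟩, hk⟩⟩
  have := (single_le_sum (fun j _ => Nat.zero_le (n j)) (mem_univ i)).trans
    (sum_le_sum_mul_of_one_le univ (fun i _ => hw i) n)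
  omega

namespace PowerSeries

variable {R : Type*} [CommRing R]

theorem coeff_invOfUnit_one_add {g : R⟦X⟧} (hg : constantCoeff g = 0) (N : ℕ) :
    coeff N (invOfUnit (1 + g) 1) = ∑ k ∈ range (N + 1), (-1) ^ k * coeff N (g ^ k) := by
  set u := invOfUnit (1 + g) 1
  have hu : (1 + g) * u = 1 := mul_invOfUnit (1 + g) 1 (by simp [hg])
  have htail : u - ∑ k ∈ range (N + 1), (-g) ^ k = (-g) ^ (N + 1) * u := by
    linear_combination (∑ k ∈ range (N + 1), (-g) ^ k) * hu + u * geom_sum_mul (-g) (N + 1)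
  have hX : X ^ (N + 1) ∣ (-g) ^ (N + 1) * u :=
    (pow_dvd_pow_of_dvd (X_dvd_iff.mpr (by simp [hg])) _).mul_right u
  rw [← sub_eq_zero, ← X_pow_dvd_iff.mp hX N N.lt_succ_self, ← htail, map_sub, map_sum]
  congr 1
  refine sum_congr rfl fun k _ => ?_
  rw [neg_pow g, show (-1 : R⟦X⟧) ^ k = C ((-1) ^ k) by simp, coeff_C_mul]

theorem coeff_sum_C_mul_X_pow_pow {ι : Type*} [DecidableEq ι] (s : Finset ι) (a : ι → R)
    (w : ι → ℕ) (k N : ℕ) :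
    coeff N ((∑ i ∈ s, C (a i) * X ^ w i) ^ k) =
      ∑ n ∈ piAntidiag s k with ∑ i ∈ s, w i * n i = N,
        (Nat.multinomial s n : R) * ∏ i ∈ s, a i ^ n i := by
  rw [sum_pow_eq_sum_piAntidiag, map_sum, sum_filter]
  refine sum_congr rfl fun n _ => ?_
  have : ∏ i ∈ s, (C (a i) * X ^ w i) ^ n i =
      C (∏ i ∈ s, a i ^ n i) * X ^ ∑ i ∈ s, w i * n i := by
    simp only [mul_pow, prod_mul_distrib, map_prod, map_pow, ← pow_mul, prod_pow_eq_pow_sum,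
      mul_comm]
  rw [this, ← mul_assoc, ← map_natCast C, ← map_mul, coeff_C_mul_X_pow]
  simp only [eq_comm]

end PowerSeries

theorem stmt_1_general (R : Type*) [CommRing R] (m : ℕ) (a : ℕ → R) (N : ℕ) :
    coeff N (invOfUnit (1 + ∑ j ∈ Finset.Icc 1 m, C (a j) * X ^ j) 1) =
      ∑ n ∈ Finset.filter (fun n : Fin m → ℕ => ∑ i, (i.1 + 1) * n i = N)
          (Fintype.piFinset fun _ => Finset.range (N + 1)),
        (-1 : R) ^ (∑ i, n i) *
          (∏ i ∈ Finset.univ.filter (fun i : Fin m => 1 ≤ i.1),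
            ((∑ k ∈ Finset.Iic i, n k).choose (n i) : R)) *
          ∏ i : Fin m, a (i.1 + 1) ^ n i := by
  classical
  have hweight (n : Fin m → ℕ) : ∑ i, n i ≤ ∑ i : Fin m, (i.1 + 1) * n i :=
    sum_le_sum_mul_of_one_le univ (fun _ _ => Nat.le_add_left 1 _) n
  rw [sum_Icc_one_eq_sum_fin, coeff_invOfUnit_one_add (by simp),
    ← sum_fiberwise_of_maps_to (g := fun n => ∑ i, n i) (t := range (N + 1))
      fun n hn => mem_range.mpr (Nat.lt_succ_of_le ((hweight n).trans (mem_filter.mp hn).2.le))]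
  refine sum_congr rfl fun k _ => ?_
  rw [coeff_sum_C_mul_X_pow_pow,
    Fintype.filter_piFinset_range_filter_sum_eq (w := fun i : Fin m => i.1 + 1)
      (fun _ => Nat.le_add_left 1 _), mul_sum]
  refine sum_congr rfl fun n hn => ?_
  rw [(mem_piAntidiag.mp (mem_filter.mp hn).1).1, Nat.multinomial_univ_fin, Nat.cast_prod,
    prod_filter_of_ne fun i _ hi => ?_, mul_assoc]
  contrapose! hi
  rw [Fin.sum_Iic_of_val_eq_zero n (by omega), Nat.choose_self, Nat.cast_one]

theorem stmt_1 (R : Type*) [CommRing R] (m : ℕ) (hm : 1 ≤ m) (a : ℕ → R) (N : ℕ) :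
    coeff N (invOfUnit (1 + ∑ j ∈ Finset.Icc 1 m, C (a j) * X ^ j) 1) =
      ∑ n ∈ Finset.filter (fun n : Fin m → ℕ => ∑ i, (i.1 + 1) * n i = N)
          (Fintype.piFinset fun _ => Finset.range (N + 1)),
        (-1 : R) ^ (∑ i, n i) *
          (∏ i ∈ Finset.univ.filter (fun i : Fin m => 1 ≤ i.1),
            ((∑ k ∈ Finset.Iic i, n k).choose (n i) : R)) *
          ∏ i : Fin m, a (i.1 + 1) ^ n i :=
  stmt_1_general R m a N
end

section
/- Let R be a commutative ring and x ∈ R. Let f = 1 + (−x²−4x−1)X + x²X² ∈ R⟦X⟧ and let Y_n denote the coefficient of X^n in f⁻¹ (so the Y_n are the sextet polynomials of hexagonal systems). Then for every n ∈ ℕ, Y_n = ∑_{k=0}^{⌊n/2⌋} (−1)^{2n−3k} · C(n−k, k) · (x²+4x+1)^{n−2k} · x^{2k}. -/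
/-!
Writing `s = x² + 4x + 1`, comparing coefficients in `f · f⁻¹ = 1` gives `Y₀ = 1`, `Y₁ = s` and
`Y_{n+2} = s Y_{n+1} - x² Y_n`, so `Y_n = E_n(s, x²)` for the Dickson polynomials of the second
kind, `E_{n+2}(s, a) = s E_{n+1}(s, a) - a E_n(s, a)`. By Pascal's rule
`∑_{i+k=n} (-a)^k C(i, k) s^(i-k)` satisfies this recurrence too, and `(-1)^(2n-3k) = (-1)^k`
turns it into the stated sum.
-/

open PowerSeries Finset

namespace Polynomial

variable {R : Type*} [CommRing R]

lemma neg_pow_mul_choose_mul_pow_succ_succ (a s : R) (m k : ℕ) :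
    (-a) ^ (k + 1) * ((m + 1).choose (k + 1) : R) * s ^ (m + 1 - (k + 1)) =
      s * ((-a) ^ (k + 1) * (m.choose (k + 1) : R) * s ^ (m - (k + 1))) -
        a * ((-a) ^ k * (m.choose k : R) * s ^ (m - k)) := by
  rw [Nat.choose_succ_succ, Nat.cast_add, Nat.add_sub_add_right]
  rcases lt_or_ge k m with hkm | hmk
  · rw [show m - k = m - (k + 1) + 1 by omega]
    ring
  · rw [Nat.choose_eq_zero_of_lt (show m < k + 1 by omega)]
    ring

theorem eval_dickson_two_eq_sum_antidiagonal (a s : R) (n : ℕ) :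
    (dickson 2 a n).eval s =
      ∑ p ∈ antidiagonal n, (-a) ^ p.2 * (p.1.choose p.2 : R) * s ^ (p.1 - p.2) := by
  induction n using Nat.twoStepInduction with
  | zero => norm_num [dickson_zero]
  | one => simp [dickson_one, Nat.sum_antidiagonal_succ]
  | more n ih₀ ih₁ =>
    rw [dickson_add_two, eval_sub, eval_mul, eval_mul, eval_X, eval_C, ih₀, ih₁,
      Nat.sum_antidiagonal_succ (n := n + 1), Nat.sum_antidiagonal_succ' (n := n),
      Nat.sum_antidiagonal_succ' (n := n)]
    simp only [neg_pow_mul_choose_mul_pow_succ_succ, sum_sub_distrib, ← mul_sum]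
    simp only [pow_zero, Nat.choose_zero_right, Nat.cast_one, mul_one, tsub_zero, one_mul,
      Nat.choose_zero_succ, Nat.cast_zero, mul_zero, zero_tsub, zero_add]
    ring

theorem eval_dickson_two_eq_sum_range (a s : R) (n : ℕ) :
    (dickson 2 a n).eval s =
      ∑ k ∈ range (n / 2 + 1), (-a) ^ k * ((n - k).choose k : R) * s ^ (n - 2 * k) := by
  rw [eval_dickson_two_eq_sum_antidiagonal, ← Nat.sum_antidiagonal_swap,
    Nat.sum_antidiagonal_eq_sum_range_succ_mk]
  simp only [Prod.swap_prod_mk]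
  refine (sum_subset (range_subset_range.2 (by omega)) fun k _ hk => ?_).symm.trans
    (sum_congr rfl fun k _ => ?_)
  · rw [mem_range] at hk
    rw [Nat.choose_eq_zero_of_lt (by omega), Nat.cast_zero, mul_zero, zero_mul]
  · rw [Nat.sub_sub, two_mul]

end Polynomial

namespace PowerSeries

open Polynomial (dickson dickson_zero dickson_one dickson_add_two eval eval_X eval_C eval_sub
  eval_mul)

variable {R : Type*} [CommRing R]

theorem coeff_eq_eval_dickson_two_of_mul_eq_one {a s : R} {g : R⟦X⟧}
    (hg : (1 - C s * X + C a * X ^ 2) * g = 1) (n : ℕ) :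
    coeff n g = (dickson 2 a n).eval s := by
  have hcoeff (m : ℕ) :
      coeff m g - s * coeff m (X * g) + a * coeff m (X ^ 2 * g) = if m = 0 then 1 else 0 := by
    simpa only [sub_mul, add_mul, one_mul, mul_assoc, map_sub, map_add, coeff_C_mul, coeff_one]
      using congrArg (coeff m) hg
  have h₀ : coeff 0 g = 1 := by simpa using hcoeff 0
  have h₁ : coeff 1 g = s := by
    simpa [coeff_X_pow_mul', h₀, sub_eq_zero] using hcoeff 1
  have h₂ (m : ℕ) : coeff (m + 2) g = s * coeff (m + 1) g - a * coeff m g := by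
    have := hcoeff (m + 2)
    simp only [coeff_succ_X_mul, coeff_X_pow_mul, add_eq_zero, two_ne_zero, and_false,
      if_false] at this
    linear_combination this
  induction n using Nat.twoStepInduction with
  | zero => norm_num [h₀, dickson_zero]
  | one => rw [h₁, dickson_one, eval_X]
  | more n ih₀ ih₁ =>
    rw [h₂, ih₀, ih₁, dickson_add_two, eval_sub, eval_mul, eval_mul, eval_X, eval_C]

end PowerSeries

theorem stmt_2 (R : Type*) [CommRing R] (x : R) (n : ℕ) :
    coeff (R := R) n (invOfUnit (1 + C (R := R) (-x ^ 2 - 4 * x - 1) * X + C (R := R) (x ^ 2) * X ^ 2) 1) =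
      ∑ k ∈ Finset.range (n / 2 + 1),
        (-1 : R) ^ (2 * n - 3 * k) * ((n - k).choose k : R) *
          (x ^ 2 + 4 * x + 1) ^ (n - 2 * k) * x ^ (2 * k) := by
  have hf : 1 + C (-x ^ 2 - 4 * x - 1) * X + C (x ^ 2) * X ^ 2 =
      1 - C (x ^ 2 + 4 * x + 1) * X + C (x ^ 2) * (X : R⟦X⟧) ^ 2 := by
    rw [show -x ^ 2 - 4 * x - 1 = -(x ^ 2 + 4 * x + 1) by ring, map_neg]
    ring
  rw [hf, coeff_eq_eval_dickson_two_of_mul_eq_one (mul_invOfUnit _ 1 (by simp)),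
    Polynomial.eval_dickson_two_eq_sum_range]
  refine sum_congr rfl fun k hk => ?_
  have hkn : 2 * k ≤ n := by rw [mem_range] at hk; omega
  rw [show 2 * n - 3 * k = k + 2 * (n - 2 * k) by omega, pow_add, pow_mul, neg_one_sq, one_pow,
    mul_one, neg_pow, pow_mul]
  ring
end

section
/- Let F_j and L_j denote the Fibonacci and Lucas numbers (F_0 = 0, F_1 = 1, F_{j+2} = F_{j+1} + F_j; L_0 = 2, L_1 = 1, L_{j+2} = L_{j+1} + L_j), and for 0 < q < 1 let L(q) = ∑_{j=1}^{∞} q^j/(1−q^j) denote the Lambert series. Then ∑_{j=1}^{∞} L_{2j}/F_{4j} = √5 · ( L((3−√5)/2) − L((7−3√5)/2) ), where both sides are convergent series of real numbers. -/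
/-!
Binet's formulas give `L_{2n} / F_{4n} = 1 / F_{2n} = √5 b / (1 - b²)` with `b = ψ^{2n} = β^n`,
`β = ψ² = (3 - √5)/2`, because `φ^{2n} = b⁻¹`. Splitting `b / (1 - b²) = b / (1 - b) - b² / (1 - b²)`
and summing over `n` turns the series into `√5 (L(β) - L(β²))`, and `β² = (7 - 3√5)/2`.
-/

/-- The Lucas numbers: `L 0 = 2`, `L 1 = 1`, `L (n+2) = L (n+1) + L n`. -/
def lucas : ℕ → ℕ
  | 0 => 2
  | 1 => 1
  | n + 2 => lucas (n + 1) + lucas n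

/-- The Lambert series `L(q) = ∑_{j ≥ 1} q^j / (1 - q^j)`. -/
noncomputable def lambert (q : ℝ) : ℝ := ∑' j : ℕ, q ^ (j + 1) / (1 - q ^ (j + 1))

open Real goldenRatio

lemma lucas_eq_goldenRatio_pow_add_goldenConj_pow (n : ℕ) : (lucas n : ℝ) = φ ^ n + ψ ^ n := by
  induction n using Nat.twoStepInduction with
  | zero => norm_num [lucas]
  | one => simp [lucas, goldenRatio_add_goldenConj]
  | more n ih₁ ih₂ =>
    have hφ : φ ^ (n + 2) = φ ^ (n + 1) + φ ^ n := by
      rw [pow_add, goldenRatio_sq]; ring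
    have hψ : ψ ^ (n + 2) = ψ ^ (n + 1) + ψ ^ n := by
      rw [pow_add, goldenConj_sq]; ring
    rw [lucas, Nat.cast_add, ih₁, ih₂, hφ, hψ]
    ring

lemma lucas_two_mul_div_fib_four_mul (n : ℕ) :
    (lucas (2 * n) : ℝ) / Nat.fib (4 * n) = √5 * ((ψ ^ 2) ^ n / (1 - ((ψ ^ 2) ^ n) ^ 2)) := by
  set a := φ ^ (2 * n)
  set b := ψ ^ (2 * n)
  have hb : 0 < b := Even.pow_pos (even_two_mul n) goldenConj_ne_zero
  have hab : a * b = 1 := by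
    rw [← mul_pow, goldenRatio_mul_goldenConj, Even.neg_one_pow (even_two_mul n)]
  have hfib : (Nat.fib (4 * n) : ℝ) = (a + b) * (a - b) / √5 := by
    rw [coe_fib_eq, show 4 * n = 2 * n * 2 by ring, pow_mul φ, pow_mul ψ, sq_sub_sq]
  have hsq : 1 - b ^ 2 = b * (a - b) := by rw [← hab]; ring
  rw [lucas_eq_goldenRatio_pow_add_goldenConj_pow, ← pow_mul, hfib, hsq,
    div_mul_cancel_left₀ hb.ne', div_div_eq_mul_div, mul_div_mul_left _ _ (by positivity)]
  ring

lemma div_one_sub_sub_sq_div_one_sub_sq {K : Type*} [Field K] {b : K} (h₁ : 1 - b ≠ 0)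
    (h₂ : 1 + b ≠ 0) : b / (1 - b) - b ^ 2 / (1 - b ^ 2) = b / (1 - b ^ 2) := by
  have h : 1 - b ^ 2 = (1 - b) * (1 + b) := by ring
  rw [h]
  field_simp
  ring

lemma summable_pow_div_one_sub_pow {q : ℝ} (h₀ : 0 ≤ q) (h₁ : q < 1) :
    Summable (fun j : ℕ => q ^ (j + 1) / (1 - q ^ (j + 1))) := by
  refine Summable.of_nonneg_of_le (fun j => ?_) (fun j => ?_)
    ((summable_geometric_of_lt_one h₀ h₁).mul_left (q / (1 - q)))
  · exact div_nonneg (pow_nonneg h₀ _) (sub_nonneg.2 (pow_le_one₀ h₀ h₁.le))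
  · have hle : 1 - q ≤ 1 - q ^ (j + 1) :=
      sub_le_sub_left (pow_le_of_le_one h₀ h₁.le j.succ_ne_zero) 1
    calc q ^ (j + 1) / (1 - q ^ (j + 1)) ≤ q ^ (j + 1) / (1 - q) :=
          div_le_div_of_nonneg_left (pow_nonneg h₀ _) (sub_pos.2 h₁) hle
      _ = q / (1 - q) * q ^ j := by ring

lemma hasSum_pow_div_one_sub_pow_sq {q : ℝ} (h₀ : 0 ≤ q) (h₁ : q < 1) :
    HasSum (fun j : ℕ => q ^ (j + 1) / (1 - (q ^ (j + 1)) ^ 2)) (lambert q - lambert (q ^ 2)) := by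
  have hsq : 0 ≤ q ^ 2 := sq_nonneg q
  have hsq₁ : q ^ 2 < 1 := pow_lt_one₀ h₀ h₁ two_ne_zero
  refine ((summable_pow_div_one_sub_pow h₀ h₁).hasSum.sub
    (summable_pow_div_one_sub_pow hsq hsq₁).hasSum).congr_fun fun j => ?_
  have hlt : q ^ (j + 1) < 1 := pow_lt_one₀ h₀ h₁ j.succ_ne_zero
  have hpow : (q ^ 2) ^ (j + 1) = (q ^ (j + 1)) ^ 2 := by ring
  rw [hpow, div_one_sub_sub_sq_div_one_sub_sq (by linarith) (by linarith [pow_nonneg h₀ (j + 1)])]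

lemma goldenConj_sq_eq : ψ ^ 2 = (3 - √5) / 2 := by
  rw [goldenConj_sq, goldenConj]
  ring

lemma goldenConj_sq_sq_eq : (ψ ^ 2) ^ 2 = (7 - 3 * √5) / 2 := by
  rw [goldenConj_sq, add_sq, goldenConj_sq, goldenConj]
  ring

theorem stmt_7 :
    Summable (fun j : ℕ => (lucas (2 * (j + 1)) : ℝ) / (Nat.fib (4 * (j + 1)) : ℝ)) ∧
    Summable (fun j : ℕ =>
      ((3 - Real.sqrt 5) / 2) ^ (j + 1) / (1 - ((3 - Real.sqrt 5) / 2) ^ (j + 1))) ∧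
    Summable (fun j : ℕ =>
      ((7 - 3 * Real.sqrt 5) / 2) ^ (j + 1) / (1 - ((7 - 3 * Real.sqrt 5) / 2) ^ (j + 1))) ∧
    (∑' j : ℕ, (lucas (2 * (j + 1)) : ℝ) / (Nat.fib (4 * (j + 1)) : ℝ)) =
      Real.sqrt 5 * (lambert ((3 - Real.sqrt 5) / 2) - lambert ((7 - 3 * Real.sqrt 5) / 2)) := by
  have h₀ : 0 ≤ ψ ^ 2 := sq_nonneg ψ
  have h₁ : ψ ^ 2 < 1 := by
    rw [goldenConj_sq]; linarith [goldenConj_neg]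
  have hsum := (hasSum_pow_div_one_sub_pow_sq h₀ h₁).mul_left √5
  simp only [← lucas_two_mul_div_fib_four_mul] at hsum
  rw [← goldenConj_sq_sq_eq, ← goldenConj_sq_eq]
  exact ⟨hsum.summable, summable_pow_div_one_sub_pow h₀ h₁,
    summable_pow_div_one_sub_pow (sq_nonneg _) (pow_lt_one₀ h₀ h₁ two_ne_zero), hsum.tsum_eq⟩
end

section
/- Let a, b, s ∈ ℂ with b ≠ 0, s ≠ 0 and s² = a² − 4b. Let f = 1 + aX + bX² ∈ ℂ⟦X⟧ and let Y_n denote the coefficient of X^n in f⁻¹. Then for every n ∈ ℕ, Y_n = (2^{n−1} b^n / s) · ( (a+s)/(−a+s)^n − (a−s)/(−a−s)^n ). (Note that b ≠ 0 forces −a+s ≠ 0 and −a−s ≠ 0, since (−a+s)(−a−s) = 4b.) -/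
/-!
With `α, β = (-a ∓ s) / 2` one has `α + β = -a` and `α * β = b`, so
`1 + a X + b X² = (1 - α X) (1 - β X)`. Its inverse is the product of the geometric series
`∑ αⁱ Xⁱ` and `∑ βʲ Xʲ`, whose `n`-th coefficient `∑_{i+j=n} αⁱ βʲ` equals
`(α^(n+1) - β^(n+1)) / (α - β)`. The closed form follows from `a + s = -2α`, `-a + s = 2β`,
`a - s = -2β`, `-a - s = 2α` and `b ≠ 0 ⇒ α, β ≠ 0`.
-/

namespace PowerSeries

variable {R : Type*} [CommRing R]

theorem invOfUnit_one_eq_of_mul_eq_one {f g : R⟦X⟧} (hf : constantCoeff f = 1) (h : f * g = 1) :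
    invOfUnit f 1 = g :=
  left_inv_eq_right_inv (invOfUnit_mul f 1 (by rw [hf, Units.val_one])) h

theorem mk_pow_mul_one_sub_C_mul_X (α : R) : mk (α ^ ·) * (1 - C α * X) = 1 := by
  simpa [rescale_mk, rescale_X] using
    congrArg (rescale α) (mk_one_mul_one_sub_eq_one (S := R))

theorem coeff_mk_pow_mul_mk_pow_mul_sub (α β : R) (n : ℕ) :
    coeff n (mk (α ^ ·) * mk (β ^ ·)) * (α - β) = α ^ (n + 1) - β ^ (n + 1) := by
  rw [coeff_mul, ← geom_sum₂_mul, Finset.Nat.sum_antidiagonal_eq_sum_range_succ_mk]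
  simp

theorem coeff_invOfUnit_one_sub_C_mul_X_mul_one_sub_C_mul_X_mul_sub (α β : R) (n : ℕ) :
    coeff n (invOfUnit ((1 - C α * X) * (1 - C β * X)) 1) * (α - β) =
      α ^ (n + 1) - β ^ (n + 1) := by
  rw [invOfUnit_one_eq_of_mul_eq_one (g := mk (α ^ ·) * mk (β ^ ·)) (by simp),
    coeff_mk_pow_mul_mk_pow_mul_sub]
  calc (1 - C α * X) * (1 - C β * X) * (mk (α ^ ·) * mk (β ^ ·))
      = (mk (α ^ ·) * (1 - C α * X)) * (mk (β ^ ·) * (1 - C β * X)) := by ring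
    _ = 1 := by rw [mk_pow_mul_one_sub_C_mul_X, mk_pow_mul_one_sub_C_mul_X, one_mul]

theorem one_sub_C_mul_X_mul_one_sub_C_mul_X (α β : R) :
    (1 - C α * X) * (1 - C β * X) = (1 + C (-(α + β)) * X + C (α * β) * X ^ 2 : R⟦X⟧) := by
  simp only [map_neg, map_add, map_mul]
  ring

end PowerSeries

open PowerSeries

theorem stmt_8 (a b s : ℂ) (hb : b ≠ 0) (hs : s ≠ 0) (h : s ^ 2 = a ^ 2 - 4 * b) (n : ℕ) :
    coeff n (invOfUnit (1 + C a * X + C b * X ^ 2) 1) =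
      (2 : ℂ) ^ ((n : ℤ) - 1) * b ^ n / s *
        ((a + s) / (-a + s) ^ n - (a - s) / (-a - s) ^ n) := by
  obtain ⟨α, β, rfl, rfl, rfl⟩ : ∃ α β : ℂ, a = -(α + β) ∧ b = α * β ∧ s = β - α :=
    ⟨(-a - s) / 2, (-a + s) / 2, by ring, by linear_combination h / 4, by ring⟩
  have hα : α ≠ 0 := left_ne_zero_of_mul hb
  have hβ : β ≠ 0 := right_ne_zero_of_mul hb
  have hαβ : α - β ≠ 0 := sub_ne_zero.mpr (sub_ne_zero.mp hs).symm
  rw [← one_sub_C_mul_X_mul_one_sub_C_mul_X,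
    eq_div_of_mul_eq hαβ (coeff_invOfUnit_one_sub_C_mul_X_mul_one_sub_C_mul_X_mul_sub α β n),
    zpow_sub₀ two_ne_zero, zpow_natCast, zpow_one,
    show - -(α + β) + (β - α) = 2 * β by ring, show - -(α + β) - (β - α) = 2 * α by ring]
  field_simp
  ring
end

section
/- Let a, b, s, q₀, q₁ ∈ ℂ with b ≠ 0, s ≠ 0 and s² = a² − 4b. Let f = 1 + aX + bX² ∈ ℂ⟦X⟧ and let S_n denote the coefficient of X^n in (q₀ + q₁X) · f⁻¹. Then for every n ∈ ℕ, S_n = (2^{n−1} b^n / s) · ( ((a+s)q₀ − 2q₁)/(−a+s)^n + ((−a+s)q₀ + 2q₁)/(−a−s)^n ). (Note that b ≠ 0 forces −a+s ≠ 0 and −a−s ≠ 0, since (−a+s)(−a−s) = 4b.) -/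
/-!
With `α, β = (-a ± s) / 2` we have `α + β = -a`, `α * β = b` and `α - β = s`, so the
denominator factors as `(1 - αX)(1 - βX)` and the coefficients satisfy the linear recurrence
`u (m + 2) = (α + β) u (m + 1) - α β u m`, solved by Binet's formula. The paper's form follows from
`b ^ n / (2α) ^ n = β ^ n / 2 ^ n`, and symmetrically for `β`.
-/

open PowerSeries

section LinearRecurrence

variable {R : Type*} [CommRing R]

theorem sub_mul_eq_of_linear_recurrence {α β : R} {u : ℕ → R}
    (hu : ∀ m, u (m + 2) = (α + β) * u (m + 1) - α * β * u m) (n : ℕ) :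
    (α - β) * u n = (u 1 - β * u 0) * α ^ n - (u 1 - α * u 0) * β ^ n := by
  induction n using Nat.twoStepInduction with
  | zero => ring
  | one => ring
  | more m ih₀ ih₁ =>
    rw [hu m]
    linear_combination (α + β) * ih₁ - α * β * ih₀

end LinearRecurrence

section QuadraticDenominator

variable {R : Type*} [CommRing R] (a b : R)

theorem coeff_one_quadratic_mul (g : R⟦X⟧) :
    coeff 1 ((1 + C a * X + C b * X ^ 2) * g) = coeff 1 g + a * coeff 0 g := by
  simp [add_mul, mul_assoc, coeff_X_pow_mul']

theorem coeff_add_two_quadratic_mul (g : R⟦X⟧) (m : ℕ) :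
    coeff (m + 2) ((1 + C a * X + C b * X ^ 2) * g) =
      coeff (m + 2) g + a * coeff (m + 1) g + b * coeff m g := by
  simp [add_mul, mul_assoc, coeff_X_pow_mul, coeff_succ_X_mul]

variable (q₀ q₁ : R)

theorem quadratic_mul_linear_mul_invOfUnit :
    (1 + C a * X + C b * X ^ 2) * ((C q₀ + C q₁ * X) * invOfUnit (1 + C a * X + C b * X ^ 2) 1) =
      C q₀ + C q₁ * X := by
  rw [mul_left_comm, mul_invOfUnit _ _ (by simp), mul_one]

theorem sub_mul_coeff_linear_mul_invOfUnit_quadratic {α β : R} (hsum : α + β = -a)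
    (hprod : α * β = b) (n : ℕ) :
    (α - β) * coeff n ((C q₀ + C q₁ * X) * invOfUnit (1 + C a * X + C b * X ^ 2) 1) =
      (q₁ + α * q₀) * α ^ n - (q₁ + β * q₀) * β ^ n := by
  set u := fun m ↦ coeff m ((C q₀ + C q₁ * X) * invOfUnit (1 + C a * X + C b * X ^ 2) 1)
  have hT := quadratic_mul_linear_mul_invOfUnit a b q₀ q₁
  have hu₀ : u 0 = q₀ := by simp [u]
  have hu₁ : u 1 = q₁ - a * q₀ := by
    have := congrArg (coeff 1) hT
    simp only [coeff_one_quadratic_mul, map_add, coeff_succ_C, coeff_succ_mul_X, coeff_zero_C,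
      zero_add] at this
    linear_combination this - a * hu₀
  have hrec : ∀ m, u (m + 2) = (α + β) * u (m + 1) - α * β * u m := by
    intro m
    have := congrArg (coeff (m + 2)) hT
    simp only [coeff_add_two_quadratic_mul, map_add, coeff_succ_C, coeff_succ_mul_X, add_zero] at this
    rw [hsum, hprod]
    linear_combination this
  rw [sub_mul_eq_of_linear_recurrence hrec n, hu₀, hu₁]
  linear_combination (β ^ n - α ^ n) * q₀ * hsum

end QuadraticDenominator

theorem stmt_9 (a b s q₀ q₁ : ℂ) (hb : b ≠ 0) (hs : s ≠ 0) (h : s ^ 2 = a ^ 2 - 4 * b) (n : ℕ) :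
    coeff n ((C q₀ + C q₁ * X) * invOfUnit (1 + C a * X + C b * X ^ 2) 1) =
      (2 : ℂ) ^ ((n : ℤ) - 1) * b ^ n / s *
        (((a + s) * q₀ - 2 * q₁) / (-a + s) ^ n +
          ((-a + s) * q₀ + 2 * q₁) / (-a - s) ^ n) := by
  obtain ⟨α, β, hα, hβ⟩ : ∃ α β : ℂ, -a + s = 2 * α ∧ -a - s = 2 * β :=
    ⟨(-a + s) / 2, (-a - s) / 2, by ring, by ring⟩
  have hprod : α * β = b := by linear_combination (-h - (-a - s) * hα - 2 * α * hβ) / 4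
  have key := sub_mul_coeff_linear_mul_invOfUnit_quadratic a b q₀ q₁
    (by linear_combination -(hα + hβ) / 2) hprod n
  rw [show α - β = s by linear_combination (hβ - hα) / 2] at key
  generalize coeff n ((C q₀ + C q₁ * X) * invOfUnit (1 + C a * X + C b * X ^ 2) 1) = c at key ⊢
  have hα₀ : α ≠ 0 := left_ne_zero_of_mul (hprod ▸ hb)
  have hβ₀ : β ≠ 0 := right_ne_zero_of_mul (hprod ▸ hb)
  rw [hα, hβ, show a + s = -(2 * β) by linear_combination -hβ, ← hprod,
    zpow_sub₀ two_ne_zero, zpow_natCast, zpow_one, mul_pow, mul_pow, mul_pow]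
  field_simp
  linear_combination key
end

section
/- Let R be a commutative ring, m ≥ 1 and a₁,…,a_m ∈ R. Let f = 1 + ∑_{j=1}^m a_j X^j ∈ R⟦X⟧, let Y_n denote the coefficient of X^n in f⁻¹, and let Y_n^{(2)} denote the coefficient of X^n in (f⁻¹)². Then for every n ∈ ℕ, (n+1) · Y_{n+1} = − ∑_{j=1}^{min(m, n+1)} j · a_j · Y_{n+1−j}^{(2)}, where (n+1)·Y_{n+1} denotes the (n+1)-fold sum of Y_{n+1} in R. -/
open PowerSeries Finset

/-! Differentiating `f * f⁻¹ = 1` gives `(f⁻¹)' = -(f⁻¹)² f'`. The coefficient of `X^n` on the left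
is `(n+1) Y_{n+1}`; on the right, `f' = ∑ j a_j X^(j-1)` turns it into the stated convolution. -/

namespace PowerSeries

variable {R : Type*}

theorem natCast_succ_mul_coeff_succ [CommSemiring R] (f : R⟦X⟧) (n : ℕ) :
    ((n + 1 : ℕ) : R) * coeff (n + 1) f = coeff n (d⁄dX R f) := by
  rw [coeff_derivative, mul_comm, Nat.cast_succ]

theorem derivative_C_mul_X_pow [CommSemiring R] (r : R) (j : ℕ) :
    d⁄dX R (C r * X ^ j) = C (j * r) * X ^ (j - 1) := by
  rcases j with _ | k
  · simp
  ext n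
  rw [coeff_derivative, coeff_C_mul_X_pow, coeff_C_mul_X_pow, add_tsub_cancel_right]
  by_cases h : n = k
  · simp only [h, if_true]; push_cast; ring
  · simp [h]

theorem coeff_sum_C_mul_X_pow_pred_mul [CommSemiring R] (b : ℕ → R) (m n : ℕ) (g : R⟦X⟧) :
    coeff n ((∑ j ∈ Icc 1 m, C (b j) * X ^ (j - 1)) * g) =
      ∑ j ∈ Icc 1 (min m (n + 1)), b j * coeff (n + 1 - j) g := by
  simp only [sum_mul, map_sum, mul_assoc, coeff_C_mul, coeff_X_pow_mul', mul_ite, mul_zero]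
  rw [← sum_filter]
  refine sum_congr ?_ fun j hj => ?_
  · ext j; simp only [mem_filter, mem_Icc]; omega
  · rw [mem_Icc] at hj; rw [show n - (j - 1) = n + 1 - j by omega]

theorem derivative_invOfUnit [CommRing R] (φ : R⟦X⟧) (u : Rˣ) (h : constantCoeff φ = u) :
    d⁄dX R (invOfUnit φ u) = -(invOfUnit φ u) ^ 2 * d⁄dX R φ :=
  letI : Invertible φ := ⟨_, invOfUnit_mul φ u h, mul_invOfUnit φ u h⟩
  derivative_invOf φ

end PowerSeries

theorem stmt_16_general (R : Type*) [CommRing R] (m : ℕ) (a : ℕ → R) (n : ℕ) :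
    ((n + 1 : ℕ) : R) *
        coeff (n + 1) (invOfUnit (1 + ∑ j ∈ Finset.Icc 1 m, C (a j) * X ^ j) 1) =
      -∑ j ∈ Finset.Icc 1 (min m (n + 1)),
        (j : R) * a j *
          coeff (n + 1 - j)
            ((invOfUnit (1 + ∑ j ∈ Finset.Icc 1 m, C (a j) * X ^ j) 1) ^ 2) := by
  set f : R⟦X⟧ := 1 + ∑ j ∈ Icc 1 m, C (a j) * X ^ j
  have hf : constantCoeff f = ↑(1 : Rˣ) := by
    simp only [f, map_add, map_one, map_sum, map_mul, constantCoeff_C, map_pow, constantCoeff_X]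
    rw [sum_eq_zero fun j hj => by
      rw [zero_pow (Nat.one_le_iff_ne_zero.mp (mem_Icc.mp hj).1), mul_zero], add_zero, Units.val_one]
  have hf' : d⁄dX R f = ∑ j ∈ Icc 1 m, C (j * a j) * X ^ (j - 1) := by
    simp only [f, map_add, derivative_one, zero_add, map_sum, derivative_C_mul_X_pow]
  rw [natCast_succ_mul_coeff_succ, derivative_invOfUnit f 1 hf, neg_mul, map_neg, mul_comm, hf',
    coeff_sum_C_mul_X_pow_pred_mul]

theorem stmt_16 (R : Type*) [CommRing R] (m : ℕ) (hm : 1 ≤ m) (a : ℕ → R) (n : ℕ) :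
    ((n + 1 : ℕ) : R) *
        coeff (n + 1) (invOfUnit (1 + ∑ j ∈ Finset.Icc 1 m, C (a j) * X ^ j) 1) =
      -∑ j ∈ Finset.Icc 1 (min m (n + 1)),
        (j : R) * a j *
          coeff (n + 1 - j)
            ((invOfUnit (1 + ∑ j ∈ Finset.Icc 1 m, C (a j) * X ^ j) 1) ^ 2) :=
  stmt_16_general R m a n
end

section
/- Let x, w ∈ ℝ with 1 − xw ≠ 0 and 1 − (1+3x)w + 2x²w² ≠ 0, and set u = w/(1 − xw). Then 1 + (−1−x)u + (−x)u² ≠ 0, and (1/(1 − xw)) · (1 + x·u) / (1 + (−1−x)u + (−x)u²) = 1 / (1 − (1+3x)w + 2x²w²). -/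
/-!
Substituting `u = w / (1 - x w)` and clearing denominators, one finds
`1 + x u = 1 / (1 - x w)` and `(1 - x w)² (1 + (-1 - x) u + (-x) u²) = 1 - (1 + 3x) w + 2x² w²`.
The second identity makes the transformed denominator nonzero, and the two together turn the
Euler transform into `(1 - x w)⁻² / ((1 - x w)⁻² (1 - (1 + 3x) w + 2x² w²))`.
-/

section EulerTransform

variable {K : Type*} [Field K] {x w : K}

theorem one_add_mul_div_one_sub_mul (h : 1 - x * w ≠ 0) :
    1 + x * (w / (1 - x * w)) = 1 / (1 - x * w) := by
  field_simp
  ring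

theorem one_sub_mul_sq_mul_antichain_denom (h : 1 - x * w ≠ 0) :
    (1 - x * w) ^ 2 * (1 + (-1 - x) * (w / (1 - x * w)) + (-x) * (w / (1 - x * w)) ^ 2) =
      1 - (1 + 3 * x) * w + 2 * x ^ 2 * w ^ 2 := by
  field_simp
  ring

end EulerTransform

theorem stmt_17 (x w u : ℝ) (h1 : 1 - x * w ≠ 0)
    (h2 : 1 - (1 + 3 * x) * w + 2 * x ^ 2 * w ^ 2 ≠ 0)
    (hu : u = w / (1 - x * w)) :
    1 + (-1 - x) * u + (-x) * u ^ 2 ≠ 0 ∧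
    (1 / (1 - x * w)) * (1 + x * u) / (1 + (-1 - x) * u + (-x) * u ^ 2) =
      1 / (1 - (1 + 3 * x) * w + 2 * x ^ 2 * w ^ 2) := by
  subst hu
  have key := one_sub_mul_sq_mul_antichain_denom h1
  have hne : 1 + (-1 - x) * (w / (1 - x * w)) + (-x) * (w / (1 - x * w)) ^ 2 ≠ 0 :=
    right_ne_zero_of_mul (key ▸ h2)
  refine ⟨hne, ?_⟩
  rw [one_add_mul_div_one_sub_mul h1, div_eq_div_iff hne h2, ← key]
  field_simp
end

section
/- Let x be an element of a commutative ring R and let F_n(x) denote the coefficient of X^n in the power series X · (1 − xX − X²)⁻¹ ∈ R⟦X⟧ (the n-th Fibonacci polynomial evaluated at x; the series 1 − xX − X² is a unit since its constant coefficient is 1). Then F_0(x) = 0 and for every n ≥ 1, F_n(x) = ∑_{k=0}^{⌊(n−1)/2⌋} C(n−1−k, k) · x^{n−1−2k}. -/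
/-!
The sums `t n = ∑_{a + b = n} C(a, b) x^(a - b)` satisfy Pascal's rule in the form
`t (n + 2) = x t (n + 1) + t n`, with `t 0 = 1` and `t 1 = x`. This is exactly the statement that
`(1 - xX - X²) · ∑ t n Xⁿ = 1`, so `∑ t n Xⁿ` is the inverse of `1 - xX - X²` and
`F_{n+1}(x) = t n`; reindexing by `b = k` gives the stated sum.
-/

open PowerSeries Finset

section Semiring

variable {R : Type*} [Semiring R]

/-- Terms with `a < b` vanish, so the truncated exponent `a - b` is harmless. -/
def fibSum (x : R) (n : ℕ) : R :=
  ∑ p ∈ antidiagonal n, (p.1.choose p.2 : R) * x ^ (p.1 - p.2)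

lemma mul_choose_mul_pow_sub_succ (x : R) (a b : ℕ) :
    x * ((a.choose (b + 1) : R) * x ^ (a - (b + 1))) = a.choose (b + 1) * x ^ (a - b) := by
  rcases lt_or_ge a (b + 1) with h | h
  · simp [Nat.choose_eq_zero_of_lt h]
  · rw [(Nat.commute_cast x _).left_comm, ← pow_succ', Nat.sub_add_eq, Nat.sub_add_cancel (Nat.le_sub_of_add_le' h)]

lemma fibSum_add_two (x : R) (n : ℕ) :
    fibSum x (n + 2) = x * fibSum x (n + 1) + fibSum x n := by
  rw [fibSum, fibSum, fibSum, Nat.sum_antidiagonal_succ', Nat.sum_antidiagonal_succ,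
    Nat.sum_antidiagonal_succ']
  simp only [Nat.choose_succ_succ', Nat.cast_add, add_mul, sum_add_distrib, mul_add, mul_sum,
    mul_choose_mul_pow_sub_succ, Nat.add_sub_add_right, Nat.choose_zero_right, Nat.choose_zero_succ,
    Nat.cast_one, Nat.cast_zero, Nat.sub_zero, one_mul, zero_mul, zero_add, ← pow_succ']
  abel

lemma fibSum_eq_sum_range (x : R) (m : ℕ) :
    fibSum x m = ∑ k ∈ range (m / 2 + 1), ((m - k).choose k : R) * x ^ (m - 2 * k) := by
  rw [fibSum, ← Nat.sum_antidiagonal_swap]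
  simp only [Prod.fst_swap, Prod.snd_swap]
  rw [Nat.sum_antidiagonal_eq_sum_range_succ (fun a b => (b.choose a : R) * x ^ (b - a))]
  symm
  refine sum_subset_zero_on_sdiff ?_ ?_ ?_
  · intro k hk
    simp only [mem_range] at *
    omega
  · intro k hk
    simp only [mem_sdiff, mem_range] at hk
    simp [Nat.choose_eq_zero_of_lt (show m - k < k by omega)]
  · intro k _
    rw [Nat.sub_sub, two_mul]

end Semiring

section CommRing

variable {R : Type*} [CommRing R]

lemma mul_mk_fibSum_eq_one (x : R) : (1 - C x * X - X ^ 2) * PowerSeries.mk (fibSum x) = 1 := by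
  ext (_ | _ | n)
  · simp [fibSum]
  · simp [sub_mul, mul_assoc, fibSum, coeff_succ_X_mul, coeff_X_pow_mul', Nat.sum_antidiagonal_succ]
  · simp [sub_mul, mul_assoc, fibSum_add_two, coeff_succ_X_mul, coeff_X_pow_mul']

lemma invOfUnit_eq_mk_fibSum (x : R) :
    invOfUnit (1 - C x * X - X ^ 2) 1 = PowerSeries.mk (fibSum x) :=
  left_inv_eq_right_inv (invOfUnit_mul _ _ (by simp)) (mul_mk_fibSum_eq_one x)

end CommRing

theorem stmt_19 (R : Type*) [CommRing R] (x : R) :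
    coeff 0 (X * invOfUnit (1 - C x * X - X ^ 2) 1) = 0 ∧
    ∀ n : ℕ, 1 ≤ n →
      coeff n (X * invOfUnit (1 - C x * X - X ^ 2) 1) =
        ∑ k ∈ Finset.range ((n - 1) / 2 + 1),
          ((n - 1 - k).choose k : R) * x ^ (n - 1 - 2 * k) := by
  refine ⟨coeff_zero_X_mul _, fun n hn => ?_⟩
  obtain ⟨m, rfl⟩ := Nat.exists_eq_add_of_le' hn
  rw [coeff_succ_X_mul, invOfUnit_eq_mk_fibSum, coeff_mk, fibSum_eq_sum_range, Nat.add_sub_cancel]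
end
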